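/- Let m ≥ 3 be an integer, A⁻¹ = [[0,0,1],[1,0,−2m],[0,1,−m²]] and B⁻¹ = [[0,0,1],[1,0,−2(m+1)],[0,1,−(m+1)²]]. Then for every nonzero vector x in the cone 𝒞, one has ‖A⁻¹x‖₁/‖x‖₁ ≥ (m⁴+2m³−5m)/(m²+6m+1) and ‖B⁻¹x‖₁/‖x‖₁ ≥ (m⁴+4m³+3m²−7m−3)/(m²+6m+1), where ‖·‖₁ is the ℓ¹ norm on ℝ³. -/

import Mathlib

open Matrix

noncomputable section

/-- `A⁻¹ = [[0,0,1],[1,0,−2m],[0,1,−m²]]`, the inverse of `A = [[2m,1,0],[m²,0,1],[1,0,0]]`. -/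
def Ainv (m : ℤ) : Matrix (Fin 3) (Fin 3) ℝ :=
  !![0, 0, 1; 1, 0, -2 * (m : ℝ); 0, 1, -(m : ℝ) ^ 2]

/-- `B⁻¹ = [[0,0,1],[1,0,−2(m+1)],[0,1,−(m+1)²]]`, the inverse of
`B = [[2(m+1),1,0],[(m+1)²,0,1],[1,0,0]]`. -/
def Binv (m : ℤ) : Matrix (Fin 3) (Fin 3) ℝ :=
  !![0, 0, 1; 1, 0, -2 * ((m : ℝ) + 1); 0, 1, -((m : ℝ) + 1) ^ 2]

/-- The cone `𝒞`: the zero vector together with all `(x₁,x₂,x₃)` with `x₁ ≠ 0`,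
`−3m ≤ x₂/x₁ ≤ −2m` and `−m²−3m ≤ x₃/x₁ ≤ −m²+1`. -/
def coneC (m : ℤ) : Set (Fin 3 → ℝ) :=
  {x | x = 0 ∨ (x 0 ≠ 0 ∧
    -3 * (m : ℝ) ≤ x 1 / x 0 ∧ x 1 / x 0 ≤ -2 * (m : ℝ) ∧
    -(m : ℝ) ^ 2 - 3 * (m : ℝ) ≤ x 2 / x 0 ∧ x 2 / x 0 ≤ -(m : ℝ) ^ 2 + 1)}

/-- The `ℓ¹` norm on `ℝ³`. -/
def l1 (x : Fin 3 → ℝ) : ℝ := |x 0| + |x 1| + |x 2|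

/-!
Both matrices are `A_k⁻¹ = [[0,0,1],[1,0,-2k],[0,1,-k²]]`, with `k = m` for `A` and `k = m + 1`
for `B`. The ratio `‖A_k⁻¹x‖₁ / ‖x‖₁` is invariant under scaling, so we may take `x = (1, a, b)`
with `-3m ≤ a ≤ -2m` and `-m²-3m ≤ b ≤ -m²+1`. Then `A_k⁻¹x = (b, 1 - 2kb, a - k²b)` has fixed
signs `(-, +, +)`, so both norms are affine in `(a, b)`: the numerator is `1 + a - (k+1)²b`, at
least `1 - 3m + (k+1)²(m²-1)`, and the denominator is `1 - a - b`, at most `m² + 6m + 1`.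
-/

def generatorInv (k : ℝ) : Matrix (Fin 3) (Fin 3) ℝ :=
  !![0, 0, 1; 1, 0, -2 * k; 0, 1, -k ^ 2]

lemma Ainv_eq_generatorInv (m : ℤ) : Ainv m = generatorInv m := rfl

lemma Binv_eq_generatorInv (m : ℤ) : Binv m = generatorInv (m + 1) := rfl

lemma l1_smul (t : ℝ) (x : Fin 3 → ℝ) : l1 (t • x) = |t| * l1 x := by
  simp only [l1, Pi.smul_apply, smul_eq_mul, abs_mul]
  ring

lemma l1_mulVec_div_l1_smul (M : Matrix (Fin 3) (Fin 3) ℝ) {t : ℝ} (ht : t ≠ 0)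
    (x : Fin 3 → ℝ) : l1 (M *ᵥ (t • x)) / l1 (t • x) = l1 (M *ᵥ x) / l1 x := by
  rw [mulVec_smul, l1_smul, l1_smul, mul_div_mul_left _ _ (abs_pos.2 ht).ne']

lemma eq_smul_vec_ratios {x : Fin 3 → ℝ} (hx : x 0 ≠ 0) :
    x = x 0 • ![1, x 1 / x 0, x 2 / x 0] := by
  ext i
  fin_cases i <;> simp [mul_div_cancel₀ _ hx]

lemma generatorInv_mulVec (k a b : ℝ) :
    generatorInv k *ᵥ ![1, a, b] = ![b, 1 - 2 * k * b, a - k ^ 2 * b] := by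
  ext i
  fin_cases i <;> simp [generatorInv, mulVec, dotProduct, Fin.sum_univ_three] <;> ring

section Normalized

variable {k a b : ℝ}

lemma l1_vec_one_of_nonpos (ha : a ≤ 0) (hb : b ≤ 0) : l1 ![1, a, b] = 1 - a - b := by
  simp only [l1, Fin.isValue, cons_val_zero, cons_val_one, cons_val, abs_one, abs_of_nonpos ha,
    abs_of_nonpos hb]
  ring

lemma l1_generatorInv_mulVec (hk : 0 ≤ k) (hb : b ≤ 0) (hab : k ^ 2 * b ≤ a) :
    l1 (generatorInv k *ᵥ ![1, a, b]) = 1 + a - (k + 1) ^ 2 * b := by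
  have hcoord₁ : 0 ≤ 1 - 2 * k * b := by nlinarith
  have hcoord₂ : 0 ≤ a - k ^ 2 * b := by linarith
  simp only [l1, generatorInv_mulVec, Fin.isValue, cons_val_zero, cons_val_one, cons_val,
    abs_of_nonpos hb, abs_of_nonneg hcoord₁, abs_of_nonneg hcoord₂]
  ring

lemma le_l1_generatorInv_mulVec_div {c : ℝ} (hc : 3 ≤ c) (hck : c ≤ k)
    (ha₁ : -3 * c ≤ a) (ha₂ : a ≤ -2 * c) (hb₁ : -c ^ 2 - 3 * c ≤ b) (hb₂ : b ≤ -c ^ 2 + 1) :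
    (1 - 3 * c + (k + 1) ^ 2 * (c ^ 2 - 1)) / (c ^ 2 + 6 * c + 1) ≤
      l1 (generatorInv k *ᵥ ![1, a, b]) / l1 ![1, a, b] := by
  have hb : b ≤ 0 := by nlinarith
  have hc_sq : 1 ≤ c ^ 2 - 1 := by nlinarith
  have hab : k ^ 2 * b ≤ a := by
    have hk_sq : c ^ 2 ≤ k ^ 2 := pow_le_pow_left₀ (by linarith) hck 2
    nlinarith [mul_le_mul hk_sq (by linarith : c ^ 2 - 1 ≤ -b) (by linarith) (sq_nonneg k)]
  rw [l1_generatorInv_mulVec (by linarith) hb hab, l1_vec_one_of_nonpos (by linarith) hb]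
  have hnum : 1 - 3 * c + (k + 1) ^ 2 * (c ^ 2 - 1) ≤ 1 + a - (k + 1) ^ 2 * b := by
    nlinarith [mul_le_mul_of_nonneg_left (by linarith : c ^ 2 - 1 ≤ -b) (sq_nonneg (k + 1))]
  have hnum_nonneg : 0 ≤ 1 - 3 * c + (k + 1) ^ 2 * (c ^ 2 - 1) := by
    have hk_sq : 1 ≤ (k + 1) ^ 2 := by nlinarith
    nlinarith [mul_le_mul_of_nonneg_right hk_sq (by linarith : 0 ≤ c ^ 2 - 1)]
  exact div_le_div₀ (hnum_nonneg.trans hnum) hnum (by linarith) (by linarith)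

end Normalized

/-- For `m ≥ 3` and every nonzero vector `x` of the cone `𝒞`:
`‖A⁻¹x‖₁/‖x‖₁ ≥ (m⁴+2m³−5m)/(m²+6m+1)` and `‖B⁻¹x‖₁/‖x‖₁ ≥ (m⁴+4m³+3m²−7m−3)/(m²+6m+1)`. -/
theorem stmt18 (m : ℤ) (hm : 3 ≤ m) (x : Fin 3 → ℝ) (hx : x ∈ coneC m) (hx0 : x ≠ 0) :
    ((m : ℝ) ^ 4 + 2 * (m : ℝ) ^ 3 - 5 * (m : ℝ)) / ((m : ℝ) ^ 2 + 6 * (m : ℝ) + 1) ≤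
      l1 ((Ainv m).mulVec x) / l1 x ∧
    ((m : ℝ) ^ 4 + 4 * (m : ℝ) ^ 3 + 3 * (m : ℝ) ^ 2 - 7 * (m : ℝ) - 3) /
        ((m : ℝ) ^ 2 + 6 * (m : ℝ) + 1) ≤
      l1 ((Binv m).mulVec x) / l1 x := by
  obtain hx_zero | ⟨h0, ha₁, ha₂, hb₁, hb₂⟩ := hx
  · exact absurd hx_zero hx0
  have hc : (3 : ℝ) ≤ m := by exact_mod_cast hm
  rw [eq_smul_vec_ratios h0, l1_mulVec_div_l1_smul _ h0, l1_mulVec_div_l1_smul _ h0,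
    Ainv_eq_generatorInv, Binv_eq_generatorInv]
  constructor
  · refine le_of_eq_of_le ?_ (le_l1_generatorInv_mulVec_div hc le_rfl ha₁ ha₂ hb₁ hb₂)
    ring
  · refine le_of_eq_of_le ?_
      (le_l1_generatorInv_mulVec_div hc (le_add_of_nonneg_right zero_le_one) ha₁ ha₂ hb₁ hb₂)
    ring
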